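/- (Layer-level pruning bound with 1-Lipschitz activation.) Let ρ : ℝ → ℝ be 1-Lipschitz, C ≥ 1, p ≥ 1, K > 0, W ∈ ℝ^{N₀×N₁} with all entries bounded by K in absolute value, and X ∈ ℝ^{m×N₀} with nonzero columns. Apply the stochastic path-following algorithm with an unbiased stochastic pruning operator S (|S(v) − v| ≤ K) independently to each column of W, producing Q ∈ ℝ^{N₀×N₁}. Then with probability at least 1 − √2·m·N₁·N₀^{−p}, max_{i,j} |ρ((XW)_{ij}) − ρ((XQ)_{ij})| ≤ K√(2Cπp log N₀)·max_{1≤i≤N₀}‖X_i‖. -/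

import Mathlib

/-!
For one column, the error vector obeys `u_t = P_t u_{t-1} + (v_t - q_t) X_t`, where
`P_t = I - X_t X_tᵀ / (C ‖X_t‖²)` is symmetric. Pairing with the backward vectors
`z_t = P_{t+1} ⋯ P_{N₀} e_i` turns the `i`-th coordinate of `u_{N₀}` into the martingale
`∑ (v_t - q_t) ⟨X_t, z_t⟩`, whose increments are conditionally centred and bounded by
`K |⟨X_t, z_t⟩|`. Since `‖P_t z‖² ≤ ‖z‖² - ⟨X_t, z⟩² / (C ‖X_t‖²)`, the squares of these bounds
telescope to at most `C K² max ‖X_t‖²`, so Azuma–Hoeffding gives the tail `2 N₀^(-πp) ≤ √2 N₀^(-p)`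
at the stated threshold. A union bound over the `m N₁` entries and the Lipschitz property of `ρ`
conclude.
-/

open MeasureTheory ProbabilityTheory Real Matrix
open scoped NNReal

noncomputable section

lemma exp_mul_le_cosh_add_mul {x κ : ℝ} (hx : |x| ≤ κ) (t : ℝ) :
    exp (t * x) ≤ cosh (t * κ) + sinh (t * κ) / κ * x := by
  rcases (abs_nonneg x).trans hx |>.eq_or_lt with rfl | hκ
  · simp [abs_nonpos_iff.mp hx]
  obtain ⟨hlo, hhi⟩ := abs_le.mp hx
  -- `t * x` is a convex combination of `± t * κ`
  have h := convexOn_exp.2 (Set.mem_univ (-(t * κ))) (Set.mem_univ (t * κ))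
    (div_nonneg (sub_nonneg.2 hhi) (by positivity))
    (div_nonneg (neg_le_iff_add_nonneg'.1 hlo) (by positivity))
    (show (κ - x) / (2 * κ) + (κ + x) / (2 * κ) = 1 by field_simp; ring)
  have harg : ((κ - x) / (2 * κ)) • -(t * κ) + ((κ + x) / (2 * κ)) • (t * κ) = t * x := by
    simp only [smul_eq_mul]; field_simp; ring
  have hval : ((κ - x) / (2 * κ)) • exp (-(t * κ)) + ((κ + x) / (2 * κ)) • exp (t * κ)
      = cosh (t * κ) + sinh (t * κ) / κ * x := by
    rw [cosh_eq, sinh_eq]; simp only [smul_eq_mul]; field_simp; ring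
  rwa [harg, hval] at h

lemma two_mul_exp_neg_pi_mul_log_le {N p : ℝ} (hN : 2 ≤ N) (hp : 1 ≤ p) :
    2 * exp (-(π * p * log N)) ≤ √2 * N ^ (-p) := by
  have hlog2 : 0 < log 2 := log_pos one_lt_two
  have hlogN : log 2 ≤ log N := log_le_log two_pos hN
  have hpL : log N ≤ p * log N := le_mul_of_one_le_left (by linarith) hp
  calc 2 * exp (-(π * p * log N)) = exp (log 2 + -(π * p * log N)) := by
        rw [exp_add, exp_log two_pos]
    _ ≤ exp (log 2 / 2 + log N * -p) := exp_le_exp.2 (by nlinarith [pi_gt_three])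
    _ = √2 * N ^ (-p) := by
        rw [exp_add, ← log_sqrt zero_le_two, exp_log (by positivity),
          rpow_def_of_pos (by linarith)]

section Hoeffding

variable {Ω : Type*} {m m0 : MeasurableSpace Ω} {μ : Measure Ω}

lemma condExp_exp_mul_le_of_abs_le [IsFiniteMeasure μ] (hm : m ≤ m0) {Z : Ω → ℝ}
    (hZ : AEMeasurable Z μ) {κ : ℝ} (hb : ∀ᵐ ω ∂μ, |Z ω| ≤ κ) (hmean : μ[Z|m] =ᵐ[μ] 0)
    (t : ℝ) : μ[fun ω => exp (t * Z ω)|m] ≤ᵐ[μ] fun _ => exp (κ ^ 2 * t ^ 2 / 2) := by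
  have hIcc : ∀ᵐ ω ∂μ, Z ω ∈ Set.Icc (-κ) κ := by
    filter_upwards [hb] with ω hω using abs_le.mp hω
  have hZint : Integrable Z μ := Integrable.of_mem_Icc _ _ hZ hIcc
  set a := cosh (t * κ)
  set b := sinh (t * κ) / κ
  calc μ[fun ω => exp (t * Z ω)|m]
      ≤ᵐ[μ] μ[(fun _ => a) + b • Z|m] :=
        condExp_mono (integrable_exp_mul_of_mem_Icc hZ hIcc)
          ((integrable_const a).add (hZint.smul b))
          (by filter_upwards [hb] with ω hω using exp_mul_le_cosh_add_mul hω t)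
    _ =ᵐ[μ] μ[fun _ => a|m] + b • μ[Z|m] :=
        (condExp_add (integrable_const a) (hZint.smul b) m).trans (.add .rfl (condExp_smul b Z m))
    _ = (fun _ => a) + b • μ[Z|m] := by rw [condExp_const hm a]
    _ =ᵐ[μ] fun _ => a := by filter_upwards [hmean] with ω hω; simp [hω]
    _ ≤ᵐ[μ] fun _ => exp (κ ^ 2 * t ^ 2 / 2) :=
        .of_forall fun _ => (cosh_le_exp_half_sq _).trans_eq (by ring_nf)

namespace ProbabilityTheory.HasSubgaussianMGF

variable {S : Ω → ℝ} {c : ℝ≥0}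

lemma mono {d : ℝ≥0} (h : HasSubgaussianMGF S c μ) (hcd : c ≤ d) : HasSubgaussianMGF S d μ :=
  ⟨h.integrable_exp_mul, fun t => (h.mgf_le t).trans (exp_le_exp.2 (by gcongr))⟩

/- Mathlib's `HasSubgaussianMGF.add_of_hasCondSubgaussianMGF` needs a standard Borel sample
space; for a bounded increment the conditional Hoeffding bound can be used directly. -/
lemma add_of_condExp_eq_zero [IsFiniteMeasure μ] (hm : m ≤ m0) (hS : Measurable[m] S)
    (h : HasSubgaussianMGF S c μ) {Z : Ω → ℝ} {κ : ℝ≥0} (hZ : AEMeasurable Z μ)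
    (hb : ∀ᵐ ω ∂μ, |Z ω| ≤ κ) (hmean : μ[Z|m] =ᵐ[μ] 0) :
    HasSubgaussianMGF (S + Z) (c + κ ^ 2) μ := by
  have hIcc : ∀ᵐ ω ∂μ, Z ω ∈ Set.Icc (-(κ : ℝ)) κ := by
    filter_upwards [hb] with ω hω using abs_le.mp hω
  have hsplit : ∀ t, (fun ω => exp (t * (S + Z) ω))
      = (fun ω => exp (t * S ω)) * fun ω => exp (t * Z ω) := fun t => by
    ext ω; simp [mul_add, exp_add]
  have hint : ∀ t, Integrable (fun ω => exp (t * (S + Z) ω)) μ := fun t => by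
    rw [hsplit]
    refine (h.integrable_exp_mul t).mul_bdd (c := exp (|t| * κ))
      (measurable_exp.comp_aemeasurable (hZ.const_mul t)).aestronglyMeasurable ?_
    filter_upwards [hb] with ω hω
    rw [Real.norm_eq_abs, abs_exp]
    exact exp_le_exp.2 ((le_abs_self _).trans ((abs_mul _ _).trans_le
      (mul_le_mul_of_nonneg_left hω (abs_nonneg t))))
  refine ⟨hint, fun t => ?_⟩
  calc mgf (S + Z) μ t
      = ∫ ω, exp (t * S ω) * μ[fun ω => exp (t * Z ω)|m] ω ∂μ := by
        rw [mgf, hsplit, ← integral_condExp hm]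
        exact integral_congr_ae (condExp_mul_of_stronglyMeasurable_left
          (hS.const_mul t).exp.stronglyMeasurable (hsplit t ▸ hint t)
          (integrable_exp_mul_of_mem_Icc hZ hIcc))
    _ ≤ ∫ ω, exp (t * S ω) * exp (κ ^ 2 * t ^ 2 / 2) ∂μ := by
        refine integral_mono_of_nonneg ?_ ((h.integrable_exp_mul t).mul_const _) ?_
        · filter_upwards [condExp_nonneg (m := m) (.of_forall fun ω => (exp_pos (t * Z ω)).le)]
            with ω hω using mul_nonneg (exp_pos _).le hω
        · filter_upwards [condExp_exp_mul_le_of_abs_le hm hZ hb hmean t] with ω hω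
          exact mul_le_mul_of_nonneg_left hω (exp_pos _).le
    _ = mgf S μ t * exp (κ ^ 2 * t ^ 2 / 2) := integral_mul_const _ _
    _ ≤ exp (c * t ^ 2 / 2) * exp (κ ^ 2 * t ^ 2 / 2) := by gcongr; exact h.mgf_le t
    _ = exp (↑(c + κ ^ 2) * t ^ 2 / 2) := by rw [← exp_add]; push_cast; ring_nf

lemma measureReal_abs_ge_le [IsFiniteMeasure μ] (h : HasSubgaussianMGF S c μ) {ε : ℝ}
    (hε : 0 ≤ ε) : μ.real {ω | ε ≤ |S ω|} ≤ 2 * exp (-ε ^ 2 / (2 * c)) :=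
  calc μ.real {ω | ε ≤ |S ω|} ≤ μ.real ({ω | ε ≤ S ω} ∪ {ω | ε ≤ (-S) ω}) :=
        measureReal_mono fun ω (hω : ε ≤ |S ω|) => (le_abs.1 hω : ε ≤ S ω ∨ ε ≤ -S ω)
    _ ≤ μ.real {ω | ε ≤ S ω} + μ.real {ω | ε ≤ (-S) ω} := measureReal_union_le _ _
    _ ≤ 2 * exp (-ε ^ 2 / (2 * c)) := by linarith [h.measure_ge_le hε, h.neg.measure_ge_le hε]

lemma measureReal_abs_ge_sqrt_log_le [IsProbabilityMeasure μ] (h : HasSubgaussianMGF S c μ)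
    (hc : 0 < c) {N : ℕ} {p : ℝ} (hN : 1 ≤ N) (hp : 1 ≤ p) :
    μ.real {ω | √(2 * c * π * p * log N) ≤ |S ω|} ≤ √2 * (N : ℝ) ^ (-p) := by
  rcases hN.eq_or_lt with rfl | hN
  · simp
  have hlogN : 0 ≤ log N := log_nonneg (by exact_mod_cast hN.le)
  refine (h.measureReal_abs_ge_le (sqrt_nonneg _)).trans ?_
  rw [sq_sqrt (by positivity), show -(2 * c * π * p * log N) / (2 * c) = -(π * p * log N) by
    field_simp]
  exact two_mul_exp_neg_pi_mul_log_le (by exact_mod_cast hN) hp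

end ProbabilityTheory.HasSubgaussianMGF

lemma hasSubgaussianMGF_sum_Icc_of_condExp_eq_zero [IsZeroOrProbabilityMeasure μ]
    {F : ℕ → MeasurableSpace Ω} (hF : ∀ n, F n ≤ m0) {Z : ℕ → Ω → ℝ} {κ : ℕ → ℝ≥0} {n : ℕ}
    (hZ : ∀ s ∈ Finset.Icc 1 n, Measurable (Z s))
    (hadapted : ∀ s ∈ Finset.Icc 1 n, ∀ r ∈ Finset.Ico 1 s, Measurable[F s] (Z r))
    (hb : ∀ s ∈ Finset.Icc 1 n, ∀ᵐ ω ∂μ, |Z s ω| ≤ κ s)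
    (hmean : ∀ s ∈ Finset.Icc 1 n, μ[Z s|F s] =ᵐ[μ] 0) :
    HasSubgaussianMGF (fun ω => ∑ s ∈ Finset.Icc 1 n, Z s ω)
      (∑ s ∈ Finset.Icc 1 n, κ s ^ 2) μ := by
  induction n with
  | zero => simp
  | succ n ih =>
    have hsub : Finset.Icc 1 n ⊆ Finset.Icc 1 (n + 1) := Finset.Icc_subset_Icc_right n.le_succ
    have hlast : n + 1 ∈ Finset.Icc 1 (n + 1) := by simp
    have hS : Measurable[F (n + 1)] fun ω => ∑ s ∈ Finset.Icc 1 n, Z s ω :=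
      Finset.measurable_fun_sum _ fun s hs => hadapted _ hlast s <| by
        simp only [Finset.mem_Icc, Finset.mem_Ico] at hs ⊢; omega
    have h := (ih (fun s hs => hZ s (hsub hs)) (fun s hs => hadapted s (hsub hs))
      (fun s hs => hb s (hsub hs)) (fun s hs => hmean s (hsub hs))).add_of_condExp_eq_zero
        (hF (n + 1)) hS (hZ _ hlast).aemeasurable (hb _ hlast) (hmean _ hlast)
    simpa only [Finset.sum_Icc_succ_top (Nat.le_add_left 1 n), Pi.add_def] using h

end Hoeffding

section RelaxedProjection

variable {n : Type*} [Fintype n]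

def relaxedProj (C : ℝ) (x w : n → ℝ) : n → ℝ := w - (x ⬝ᵥ w / (C * (x ⬝ᵥ x))) • x

lemma relaxedProj_dotProduct (C : ℝ) (x u w : n → ℝ) :
    relaxedProj C x u ⬝ᵥ w = u ⬝ᵥ relaxedProj C x w := by
  simp only [relaxedProj, sub_dotProduct, dotProduct_sub, smul_dotProduct, dotProduct_smul,
    smul_eq_mul, dotProduct_comm x]
  ring

lemma dotProduct_self_sub_relaxedProj (C : ℝ) (x w : n → ℝ) :
    w ⬝ᵥ w - relaxedProj C x w ⬝ᵥ relaxedProj C x w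
      = (2 - C⁻¹) * ((x ⬝ᵥ w) ^ 2 / (C * (x ⬝ᵥ x))) := by
  rcases eq_or_ne x 0 with rfl | hx
  · simp [relaxedProj]
  rcases eq_or_ne C 0 with rfl | hC
  · simp [relaxedProj]
  have hxx : x ⬝ᵥ x ≠ 0 := fun h => hx (dotProduct_self_eq_zero.1 h)
  simp only [relaxedProj, sub_dotProduct, dotProduct_sub, smul_dotProduct, dotProduct_smul,
    smul_eq_mul, dotProduct_comm w x]
  field_simp
  ring

variable {C : ℝ}

lemma relaxedProj_dotProduct_self_le (hC : 1 ≤ C) (x w : n → ℝ) :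
    relaxedProj C x w ⬝ᵥ relaxedProj C x w ≤ w ⬝ᵥ w := by
  have hxx : 0 ≤ x ⬝ᵥ x := Finset.sum_nonneg fun i _ => mul_self_nonneg (x i)
  have h2C : 0 ≤ 2 - C⁻¹ := by linarith [inv_le_one_of_one_le₀ hC]
  have hC0 : 0 ≤ C := by linarith
  have hdrop : 0 ≤ (2 - C⁻¹) * ((x ⬝ᵥ w) ^ 2 / (C * (x ⬝ᵥ x))) := by positivity
  linarith [dotProduct_self_sub_relaxedProj C x w]

lemma sq_dotProduct_le_mul_sub_relaxedProj (hC : 1 ≤ C) (x w : n → ℝ) :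
    (x ⬝ᵥ w) ^ 2 ≤ C * (x ⬝ᵥ x) * (w ⬝ᵥ w - relaxedProj C x w ⬝ᵥ relaxedProj C x w) := by
  rcases eq_or_ne x 0 with rfl | hx
  · simp
  have hxx : 0 < x ⬝ᵥ x := by simpa using dotProduct_self_star_pos_iff.2 hx
  have h2C : 1 ≤ 2 - C⁻¹ := by linarith [inv_le_one_of_one_le₀ hC]
  have hCxx : C * (x ⬝ᵥ x) ≠ 0 := by positivity
  rw [dotProduct_self_sub_relaxedProj, mul_left_comm, mul_div_cancel₀ _ hCxx]
  nlinarith [sq_nonneg (x ⬝ᵥ w)]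

/-- `backwardPath C X N e t = P_{t+1} ⋯ P_N e` with `P_s = relaxedProj C (X s)`, and `= e` for
`t ≥ N`. -/
def backwardPath (C : ℝ) (X : ℕ → n → ℝ) (N : ℕ) (e : n → ℝ) (t : ℕ) : n → ℝ :=
  if N ≤ t then e else relaxedProj C (X (t + 1)) (backwardPath C X N e (t + 1))
termination_by N - t

variable {X : ℕ → n → ℝ} {N : ℕ} {e : n → ℝ} {t : ℕ}

lemma backwardPath_of_le (h : N ≤ t) : backwardPath C X N e t = e := by
  rw [backwardPath, if_pos h]

lemma backwardPath_of_lt (h : t < N) :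
    backwardPath C X N e t = relaxedProj C (X (t + 1)) (backwardPath C X N e (t + 1)) := by
  rw [backwardPath, if_neg h.not_ge]

lemma dotProduct_backwardPath_eq_sum {u : ℕ → n → ℝ} {d : ℕ → ℝ} (h0 : u 0 = 0)
    (hu : ∀ t, u (t + 1) = relaxedProj C (X (t + 1)) (u t) + d (t + 1) • X (t + 1))
    (ht : t ≤ N) :
    u t ⬝ᵥ backwardPath C X N e t
      = ∑ s ∈ Finset.Icc 1 t, d s * (X s ⬝ᵥ backwardPath C X N e s) := by
  induction t with
  | zero => simp [h0]
  | succ t ih =>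
    rw [Finset.sum_Icc_succ_top (by omega), ← ih (by omega), backwardPath_of_lt ht, hu,
      add_dotProduct, relaxedProj_dotProduct, smul_dotProduct, smul_eq_mul]

lemma sum_sq_dotProduct_backwardPath_le (hC : 1 ≤ C) {M : ℝ} (hM0 : 0 ≤ M)
    (hM : ∀ s ∈ Finset.Icc 1 N, X s ⬝ᵥ X s ≤ M) :
    ∑ s ∈ Finset.Icc 1 N, (X s ⬝ᵥ backwardPath C X N e s) ^ 2 ≤ C * M * (e ⬝ᵥ e) := by
  set z := backwardPath C X N e
  have htel : ∀ t ≤ N,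
      ∑ s ∈ Finset.Icc 1 t, (X s ⬝ᵥ z s) ^ 2 ≤ C * M * (z t ⬝ᵥ z t - z 0 ⬝ᵥ z 0) := by
    intro t ht
    induction t with
    | zero => simp
    | succ t ih =>
      have hzt : z t = relaxedProj C (X (t + 1)) (z (t + 1)) := backwardPath_of_lt ht
      have hstep := sq_dotProduct_le_mul_sub_relaxedProj hC (X (t + 1)) (z (t + 1))
      have hdrop := relaxedProj_dotProduct_self_le hC (X (t + 1)) (z (t + 1))
      rw [← hzt] at hstep hdrop
      have hX := hM (t + 1) (Finset.mem_Icc.2 ⟨by omega, ht⟩)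
      have hscale : C * (X (t + 1) ⬝ᵥ X (t + 1)) * (z (t + 1) ⬝ᵥ z (t + 1) - z t ⬝ᵥ z t)
          ≤ C * M * (z (t + 1) ⬝ᵥ z (t + 1) - z t ⬝ᵥ z t) := by gcongr
      rw [Finset.sum_Icc_succ_top (by omega)]
      linarith [ih (by omega)]
  have hz0 : 0 ≤ z 0 ⬝ᵥ z 0 := Finset.sum_nonneg fun i _ => mul_self_nonneg _
  have hCM : 0 ≤ C * M := mul_nonneg (by linarith) hM0
  calc _ ≤ C * M * (z N ⬝ᵥ z N - z 0 ⬝ᵥ z 0) := htel N le_rfl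
    _ ≤ C * M * (e ⬝ᵥ e) := by
        rw [show z N = e from backwardPath_of_le le_rfl]
        exact mul_le_mul_of_nonneg_left (by linarith) hCM

end RelaxedProjection

/-- One run of the path-following algorithm on a column `w` (rows indexed from `1`): `q t` is the
chosen weight, `v t` the value handed to the pruning operator `S`, and `u t` the accumulated
error `∑_{s ≤ t} (w s - q s) X s`. -/
structure IsPathFollowing {n : Type*} [Fintype n] (C : ℝ) (X : ℕ → n → ℝ) (w q v : ℕ → ℝ)
    (u : ℕ → n → ℝ) : Prop where
  error_zero : u 0 = 0
  error_succ : ∀ t, u (t + 1) = u t + (w (t + 1) - q (t + 1)) • X (t + 1)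
  target_succ : ∀ t, v (t + 1) = w (t + 1) + u t ⬝ᵥ X (t + 1) / (C * (X (t + 1) ⬝ᵥ X (t + 1)))

namespace IsPathFollowing

variable {n : Type*} [Fintype n] {C : ℝ} {X : ℕ → n → ℝ} {w q v : ℕ → ℝ} {u : ℕ → n → ℝ}

lemma error_eq_sum (h : IsPathFollowing C X w q v u) (t : ℕ) :
    u t = ∑ s ∈ Finset.Icc 1 t, (w s - q s) • X s := by
  induction t with
  | zero => simp [h.error_zero]
  | succ t ih => rw [h.error_succ, ih, Finset.sum_Icc_succ_top (by omega)]

lemma error_apply_eq_sub (h : IsPathFollowing C X w q v u) (t : ℕ) (i : n) :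
    u t i = ∑ s ∈ Finset.Icc 1 t, X s i * w s - ∑ s ∈ Finset.Icc 1 t, X s i * q s := by
  simp only [h.error_eq_sum, Finset.sum_apply, Pi.smul_apply, smul_eq_mul,
    ← Finset.sum_sub_distrib]
  exact Finset.sum_congr rfl fun s _ => by ring

lemma error_succ_eq_relaxedProj (h : IsPathFollowing C X w q v u) (t : ℕ) :
    u (t + 1) = relaxedProj C (X (t + 1)) (u t) + (v (t + 1) - q (t + 1)) • X (t + 1) := by
  rw [h.error_succ, h.target_succ, relaxedProj, dotProduct_comm]
  module

lemma error_apply_eq_sum [DecidableEq n] (h : IsPathFollowing C X w q v u) (N : ℕ) (i : n) :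
    u N i = ∑ s ∈ Finset.Icc 1 N,
      (v s - q s) * (X s ⬝ᵥ backwardPath C X N (Pi.single i 1) s) := by
  have := dotProduct_backwardPath_eq_sum (N := N) (e := Pi.single i 1) (d := fun s => v s - q s)
    h.error_zero h.error_succ_eq_relaxedProj le_rfl
  rwa [backwardPath_of_le le_rfl, dotProduct_single, mul_one] at this

end IsPathFollowing

section Stochastic

variable {n : Type*} [Fintype n] {Ω : Type*} {m0 : MeasurableSpace Ω} {μ : Measure Ω} {C : ℝ}
  {X : ℕ → n → ℝ} {w : ℕ → ℝ} {q v : ℕ → Ω → ℝ} {u : ℕ → Ω → n → ℝ}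

lemma IsPathFollowing.measurable_target {G : MeasurableSpace Ω}
    (h : ∀ ω, IsPathFollowing C X w (q · ω) (v · ω) (u · ω)) {s : ℕ} (hs : 1 ≤ s)
    (hq : ∀ r ∈ Finset.Ico 1 s, Measurable[G] (q r)) : Measurable[G] (v s) := by
  obtain ⟨t, rfl⟩ : ∃ t, s = t + 1 := ⟨s - 1, by omega⟩
  have hv : v (t + 1) = fun ω => w (t + 1) + (∑ r ∈ Finset.Icc 1 t,
      (w r - q r ω) * (X r ⬝ᵥ X (t + 1))) / (C * (X (t + 1) ⬝ᵥ X (t + 1))) := by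
    ext ω
    simp [(h ω).target_succ, (h ω).error_eq_sum, sum_dotProduct]
  rw [hv]
  refine measurable_const.add (Measurable.div_const (Finset.measurable_sum _ fun r hr => ?_) _)
  exact (measurable_const.sub (hq r (by simpa [Nat.lt_succ_iff] using hr))).mul_const _

lemma hasSubgaussianMGF_error_apply [IsProbabilityMeasure μ] [DecidableEq n] {K M : ℝ}
    (hC : 1 ≤ C) (hM0 : 0 ≤ M) {N : ℕ}
    (hpath : ∀ ω, IsPathFollowing C X w (q · ω) (v · ω) (u · ω))
    (hq : ∀ t, Measurable (q t)) {F : ℕ → MeasurableSpace Ω} (hF : ∀ t, F t ≤ m0)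
    (hqF : ∀ t, ∀ s ∈ Finset.Ico 1 t, Measurable[F t] (q s))
    (hb : ∀ t ∈ Finset.Icc 1 N, ∀ᵐ ω ∂μ, |q t ω - v t ω| ≤ K)
    (hmean : ∀ t ∈ Finset.Icc 1 N, μ[fun ω => q t ω - v t ω|F t] =ᵐ[μ] 0)
    (hM : ∀ t ∈ Finset.Icc 1 N, X t ⬝ᵥ X t ≤ M) (i : n) :
    HasSubgaussianMGF (fun ω => u N ω i) (C * K ^ 2 * M).toNNReal μ := by
  set c : ℕ → ℝ := fun s => X s ⬝ᵥ backwardPath C X N (Pi.single i 1) s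
  have hsum := hasSubgaussianMGF_sum_Icc_of_condExp_eq_zero (μ := μ) hF
    (Z := fun s ω => (v s ω - q s ω) * c s) (κ := fun s => ‖K * c s‖₊) (n := N)
    (fun s hs => ((IsPathFollowing.measurable_target hpath (Finset.mem_Icc.1 hs).1
      fun r _ => hq r).sub (hq s)).mul_const _)
    (fun s hs r hr => ((IsPathFollowing.measurable_target hpath (Finset.mem_Ico.1 hr).1
      fun r' hr' => hqF s r' (by simp only [Finset.mem_Ico] at hr hr' ⊢; omega)).sub
        (hqF s r hr)).mul_const _)
    (fun s hs => by
      filter_upwards [hb s hs] with ω hω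
      rw [coe_nnnorm, Real.norm_eq_abs, abs_mul, abs_mul, abs_sub_comm]
      exact mul_le_mul_of_nonneg_right (hω.trans (le_abs_self K)) (abs_nonneg _))
    (fun s hs => by
      have hZ : (fun ω => (v s ω - q s ω) * c s) = (-c s) • fun ω => q s ω - v s ω := by
        ext ω; simp only [Pi.smul_apply, smul_eq_mul]; ring
      rw [hZ]
      filter_upwards [condExp_smul (μ := μ) (-c s) (fun ω => q s ω - v s ω) (F s), hmean s hs]
        with ω h1 h2
      rw [h1, Pi.smul_apply, h2, Pi.zero_apply, smul_zero])
  refine (hsum.mono ?_).congr (.of_forall fun ω => ((hpath ω).error_apply_eq_sum N i).symm)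
  have hbudget := sum_sq_dotProduct_backwardPath_le (e := Pi.single i 1) hC hM0 hM
  rw [single_dotProduct, Pi.single_eq_same, mul_one] at hbudget
  rw [Real.le_toNNReal_iff_coe_le (by positivity)]
  push_cast
  simp only [norm_mul, Real.norm_eq_abs, mul_pow, sq_abs, ← Finset.mul_sum]
  nlinarith [sq_nonneg K]

lemma measureReal_abs_error_apply_ge_le [IsProbabilityMeasure μ] [DecidableEq n] {K M p : ℝ}
    (hC : 1 ≤ C) (hK : 0 < K) (hM0 : 0 < M) (hp : 1 ≤ p) {N : ℕ} (hN : 1 ≤ N)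
    (hpath : ∀ ω, IsPathFollowing C X w (q · ω) (v · ω) (u · ω))
    (hq : ∀ t, Measurable (q t)) {F : ℕ → MeasurableSpace Ω} (hF : ∀ t, F t ≤ m0)
    (hqF : ∀ t, ∀ s ∈ Finset.Ico 1 t, Measurable[F t] (q s))
    (hb : ∀ t ∈ Finset.Icc 1 N, ∀ᵐ ω ∂μ, |q t ω - v t ω| ≤ K)
    (hmean : ∀ t ∈ Finset.Icc 1 N, μ[fun ω => q t ω - v t ω|F t] =ᵐ[μ] 0)
    (hM : ∀ t ∈ Finset.Icc 1 N, X t ⬝ᵥ X t ≤ M) (i : n) :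
    μ.real {ω | K * √(2 * C * π * p * log N) * √M ≤ |u N ω i|} ≤ √2 * (N : ℝ) ^ (-p) := by
  have hθ : K * √(2 * C * π * p * log N) * √M
      = √(2 * (C * K ^ 2 * M).toNNReal * π * p * log N) := by
    have hlog : 0 ≤ log N := log_nonneg (by exact_mod_cast hN)
    rw [Real.coe_toNNReal _ (by positivity), show 2 * (C * K ^ 2 * M) * π * p * log N
      = K ^ 2 * (2 * C * π * p * log N) * M by ring, sqrt_mul' _ hM0.le,
      sqrt_mul (sq_nonneg K), sqrt_sq hK.le]
  rw [hθ]
  exact (hasSubgaussianMGF_error_apply hC hM0.le hpath hq hF hqF hb hmean hM i)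
    |>.measureReal_abs_ge_sqrt_log_le (Real.toNNReal_pos.2 (by positivity)) hN hp

end Stochastic

lemma one_sub_card_mul_le_measureReal {Ω : Type*} [MeasurableSpace Ω] {μ : Measure Ω}
    [IsProbabilityMeasure μ] {ι : Type*} {s : Finset ι} {B : ι → Set Ω} {E : Set Ω} {δ : ℝ}
    (hE : Eᶜ ⊆ ⋃ k ∈ s, B k) (hB : ∀ k ∈ s, μ.real (B k) ≤ δ) :
    1 - s.card * δ ≤ μ.real E := by
  have hunion := measureReal_union_le (μ := μ) E Eᶜ
  rw [Set.union_compl_self, probReal_univ] at hunion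
  have hsum := Finset.sum_le_card_nsmul s _ δ hB
  rw [nsmul_eq_mul] at hsum
  linarith [(measureReal_mono hE (measure_ne_top μ _)).trans (measureReal_biUnion_finset_le s B)]

end

theorem layer_pruning_error_bound_general {m N₀ N₁ : ℕ} {Ω : Type*} [MeasurableSpace Ω]
    (μ : Measure Ω) [IsProbabilityMeasure μ]
    (hN₀ : 1 ≤ N₀)
    (ρ : ℝ → ℝ) (hρ : LipschitzWith 1 ρ)
    (C p K : ℝ) (hC : 1 ≤ C) (hp : 1 ≤ p) (hK : 0 < K)
    (W : ℕ → ℕ → ℝ)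
    (X : ℕ → Fin m → ℝ) (hX : ∀ t, 1 ≤ t → t ≤ N₀ → X t ≠ 0)
    -- `q t j` is the pruned weight in row `t`, column `j`; `u · j` the accumulated
    -- error of column `j`
    (q : ℕ → ℕ → Ω → ℝ) (hq : ∀ t j, Measurable (q t j))
    (u : ℕ → ℕ → Ω → Fin m → ℝ) (hu0 : ∀ j, u 0 j = 0)
    (v : ℕ → ℕ → Ω → ℝ)
    (hv : ∀ t j ω, v t j ω =
      W t j + (∑ i, u (t - 1) j ω i * X t i) / (C * ∑ i, X t i ^ 2))
    (hu : ∀ t j, 1 ≤ t →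
      u t j = fun ω => u (t - 1) j ω + (W t j - q t j ω) • X t)
    (hbdd : ∀ t j, 1 ≤ t → t ≤ N₀ → 1 ≤ j → j ≤ N₁ →
      ∀ᵐ ω ∂μ, |q t j ω - v t j ω| ≤ K)
    (past : ℕ → ℕ → MeasurableSpace Ω)
    (hpast : ∀ t j, past t j = ⨆ s ∈ Set.Ico 1 t,
      MeasurableSpace.comap (q s j) (inferInstance : MeasurableSpace ℝ))
    (hmean : ∀ t j, 1 ≤ t → t ≤ N₀ → 1 ≤ j → j ≤ N₁ →
      μ[(fun ω => q t j ω - v t j ω) | past t j] =ᵐ[μ] 0)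
    (Mx : ℕ → ℝ)
    (hMx : ∀ t (ht : 1 ≤ t), Mx t =
      (Finset.Icc 1 t).sup' (Finset.nonempty_Icc.mpr ht) (fun i => ∑ j, X i j ^ 2)) :
    1 - Real.sqrt 2 * m * N₁ * (N₀ : ℝ) ^ (-p) ≤
    (μ {ω | ∀ j, 1 ≤ j → j ≤ N₁ → ∀ i : Fin m,
        |ρ (∑ t ∈ Finset.Icc 1 N₀, X t i * W t j)
          - ρ (∑ t ∈ Finset.Icc 1 N₀, X t i * q t j ω)| ≤
        K * Real.sqrt (2 * C * π * p * Real.log N₀) * Real.sqrt (Mx N₀)}).toReal := by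
  have hM : ∀ t ∈ Finset.Icc 1 N₀, X t ⬝ᵥ X t ≤ Mx N₀ := fun t ht => by
    rw [hMx N₀ hN₀, dotProduct, Finset.sum_congr rfl fun i _ => (sq (X t i)).symm]
    exact Finset.le_sup' (fun t => ∑ i, X t i ^ 2) ht
  have hMpos : 0 < Mx N₀ := (hM 1 (by simp [hN₀])).trans_lt' <| by
    simpa using dotProduct_self_star_pos_iff.2 (hX 1 le_rfl hN₀)
  calc 1 - √2 * m * N₁ * (N₀ : ℝ) ^ (-p)
      = 1 - (Finset.Icc 1 N₁ ×ˢ Finset.univ).card * (√2 * (N₀ : ℝ) ^ (-p)) := by simp; ring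
    _ ≤ _ := one_sub_card_mul_le_measureReal (B := fun ji => {ω |
        K * √(2 * C * π * p * log N₀) * √(Mx N₀) ≤ |∑ t ∈ Finset.Icc 1 N₀, X t ji.2 * W t ji.1
          - ∑ t ∈ Finset.Icc 1 N₀, X t ji.2 * q t ji.1 ω|}) ?_ ?_
  · intro ω hω
    simp only [Set.mem_compl_iff, Set.mem_ofPred_eq, not_forall, not_le] at hω
    obtain ⟨j, hj1, hj2, i, hi⟩ := hω
    simp only [Set.mem_iUnion]
    exact ⟨(j, i), by simp [hj1, hj2], hi.le.trans (by simpa [Real.dist_eq] using hρ.dist_le_mul _ _)⟩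
  rintro ⟨j, i⟩ hj
  obtain ⟨hj1, hj2⟩ : 1 ≤ j ∧ j ≤ N₁ := by simpa using hj
  have hpath : ∀ ω, IsPathFollowing C X (W · j) (q · j ω) (v · j ω) (u · j ω) := fun ω =>
    { error_zero := by rw [hu0]; rfl
      error_succ := fun t => by simpa using congrFun (hu (t + 1) j (by omega)) ω
      target_succ := fun t => by simpa [dotProduct, sq] using hv (t + 1) j ω }
  simpa only [(hpath _).error_apply_eq_sub] using
    measureReal_abs_error_apply_ge_le (F := (past · j)) hC hK hMpos hp hN₀ hpath (hq · j)
      (fun t => (hpast t j).symm ▸ iSup₂_le fun s _ => (hq s j).comap_le)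
      (fun t s hs => hpast t j ▸ (comap_measurable _).mono
        (le_iSup₂_of_le (f := fun s (_ : s ∈ Set.Ico 1 t) => MeasurableSpace.comap (q s j) _) s
          (by simpa using hs) le_rfl) le_rfl)
      (fun t ht => hbdd t j (Finset.mem_Icc.1 ht).1 (Finset.mem_Icc.1 ht).2 hj1 hj2)
      (fun t ht => hmean t j (Finset.mem_Icc.1 ht).1 (Finset.mem_Icc.1 ht).2 hj1 hj2) hM i

/-- Layer-level pruning bound with a 1-Lipschitz activation `ρ`. The stochastic
path-following algorithm with an unbiased pruning operator (a.s. error at most `K`)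
is applied independently to each of the `N₁` columns of `W` (entries bounded by `K`),
producing `Q`. Then with probability at least `1 − √2·m·N₁·N₀^{−p}`,
`max_{i,j} |ρ((XW)_{ij}) − ρ((XQ)_{ij})| ≤ K√(2Cπp log N₀)·max_{1≤i≤N₀}‖X_i‖`. -/
theorem layer_pruning_error_bound {m N₀ N₁ : ℕ} {Ω : Type*} [MeasurableSpace Ω]
    (μ : Measure Ω) [IsProbabilityMeasure μ]
    (hN₀ : 1 ≤ N₀) (hN₁ : 1 ≤ N₁)
    (ρ : ℝ → ℝ) (hρ : LipschitzWith 1 ρ)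
    (C p K : ℝ) (hC : 1 ≤ C) (hp : 1 ≤ p) (hK : 0 < K)
    (W : ℕ → ℕ → ℝ) (hW : ∀ t j, 1 ≤ t → t ≤ N₀ → 1 ≤ j → j ≤ N₁ → |W t j| ≤ K)
    (X : ℕ → Fin m → ℝ) (hX : ∀ t, 1 ≤ t → t ≤ N₀ → X t ≠ 0)
    -- `q t j` is the pruned weight in row `t`, column `j`; `u · j` the accumulated
    -- error of column `j`
    (q : ℕ → ℕ → Ω → ℝ) (hq : ∀ t j, Measurable (q t j))
    (u : ℕ → ℕ → Ω → Fin m → ℝ) (hu0 : ∀ j, u 0 j = 0)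
    (v : ℕ → ℕ → Ω → ℝ)
    (hv : ∀ t j ω, v t j ω =
      W t j + (∑ i, u (t - 1) j ω i * X t i) / (C * ∑ i, X t i ^ 2))
    (hu : ∀ t j, 1 ≤ t →
      u t j = fun ω => u (t - 1) j ω + (W t j - q t j ω) • X t)
    (hbdd : ∀ t j, 1 ≤ t → t ≤ N₀ → 1 ≤ j → j ≤ N₁ →
      ∀ᵐ ω ∂μ, |q t j ω - v t j ω| ≤ K)
    (past : ℕ → ℕ → MeasurableSpace Ω)
    (hpast : ∀ t j, past t j = ⨆ s ∈ Set.Ico 1 t,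
      MeasurableSpace.comap (q s j) (inferInstance : MeasurableSpace ℝ))
    (hmean : ∀ t j, 1 ≤ t → t ≤ N₀ → 1 ≤ j → j ≤ N₁ →
      μ[(fun ω => q t j ω - v t j ω) | past t j] =ᵐ[μ] 0)
    (Mx : ℕ → ℝ)
    (hMx : ∀ t (ht : 1 ≤ t), Mx t =
      (Finset.Icc 1 t).sup' (Finset.nonempty_Icc.mpr ht) (fun i => ∑ j, X i j ^ 2)) :
    1 - Real.sqrt 2 * m * N₁ * (N₀ : ℝ) ^ (-p) ≤
    (μ {ω | ∀ j, 1 ≤ j → j ≤ N₁ → ∀ i : Fin m,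
        |ρ (∑ t ∈ Finset.Icc 1 N₀, X t i * W t j)
          - ρ (∑ t ∈ Finset.Icc 1 N₀, X t i * q t j ω)| ≤
        K * Real.sqrt (2 * C * π * p * Real.log N₀) * Real.sqrt (Mx N₀)}).toReal :=
  layer_pruning_error_bound_general μ hN₀ ρ hρ C p K hC hp hK W X hX q hq u hu0 v hv hu hbdd past
    hpast hmean Mx hMx
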